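/- Let C be an abelian category. Then C is well-powered if and only if C◁Set is well-powered. -/

import Mathlib

open CategoryTheory Limits

universe v u

/-- An object of the set-decorated category `C ◁ Set`: a triple `(c, S, f)` with `c` an
object of `C`, `S` a set, and `f : S → End c`, encoded as a function `ZFSet → End c`
vanishing outside `S` (the paper's convention that `f` evaluates to `0` outside `S`). -/
structure DecObj (C : Type u) [Category.{v} C] [Preadditive C] : Type (max u v 2) where
  c : C
  S : ZFSet.{0}
  f : ZFSet.{0} → (c ⟶ c)
  hf : ∀ s : ZFSet.{0}, s ∉ S → f s = 0

namespace DecObj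

variable {C : Type u} [Category.{v} C] [Preadditive C]

/-- `ψ : c ⟶ c'` intertwines the decorations of `X` and `Y`; by the vanishing-outside-`S`
convention this is exactly the three-case condition of the paper. -/
def Intertwines (X Y : DecObj C) (ψ : X.c ⟶ Y.c) : Prop :=
  ∀ s : ZFSet.{0}, X.f s ≫ ψ = ψ ≫ Y.f s

/-- Morphisms in `C ◁ Set`. -/
@[ext]
structure Hom (X Y : DecObj C) where
  ψ : X.c ⟶ Y.c
  comm : Intertwines X Y ψ

instance : Category (DecObj C) where
  Hom := Hom
  id X := ⟨𝟙 X.c, fun s => by simp [Intertwines]⟩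
  comp g h := ⟨g.ψ ≫ h.ψ, fun s => by
    rw [← Category.assoc, g.comm s, Category.assoc, h.comm s, Category.assoc]⟩

@[simp] theorem id_ψ (X : DecObj C) : Hom.ψ (𝟙 X) = 𝟙 X.c := rfl

@[simp] theorem comp_ψ {X Y Z : DecObj C} (g : X ⟶ Y) (h : Y ⟶ Z) :
    (g ≫ h).ψ = g.ψ ≫ h.ψ := rfl

/-- The forgetful functor `U : C ◁ Set ⥤ C`. -/
def forgetDec (C : Type u) [Category.{v} C] [Preadditive C] : DecObj C ⥤ C where
  obj X := X.c
  map g := g.ψ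

end DecObj

/-! A functor that preserves monomorphisms and reflects factorizations through monomorphisms is
injective on subobjects. The zero decoration `C ⥤ C ◁ Set` is such a functor since it is fully
faithful. So is the forgetful functor `C ◁ Set ⥤ C`: if `h ≫ g.ψ = f.ψ` with `g.ψ` mono, then `h`
automatically intertwines the decorations. -/

namespace CategoryTheory.Functor

universe w v₁ v₂ u₁ u₂

variable {D : Type u₁} [Category.{v₁} D] {E : Type u₂} [Category.{v₂} E]

def LiftsFactorizationsThroughMonos (F : D ⥤ E) : Prop :=
  ∀ ⦃A B X : D⦄ (f : A ⟶ X) (g : B ⟶ X) [Mono g] (h : F.obj A ⟶ F.obj B),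
    h ≫ F.map g = F.map f → ∃ h' : A ⟶ B, h' ≫ g = f

theorem liftsFactorizationsThroughMonos_of_full_of_faithful (F : D ⥤ E) [F.Full] [F.Faithful] :
    F.LiftsFactorizationsThroughMonos := by
  intro A B X f g _ h hfac
  refine ⟨F.preimage h, F.map_injective ?_⟩
  rw [F.map_comp, F.map_preimage, hfac]

variable (F : D ⥤ E) [F.PreservesMonomorphisms]

def subobjectMap (X : D) : Subobject X → Subobject (F.obj X) :=
  Subobject.lift (fun _ f _ => Subobject.mk (F.map f)) fun _ _ f g _ _ i w =>
    Subobject.mk_eq_mk_of_comm _ _ (F.mapIso i) (by rw [mapIso_hom, ← F.map_comp, w])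

@[simp]
theorem subobjectMap_mk {A X : D} (f : A ⟶ X) [Mono f] :
    F.subobjectMap X (Subobject.mk f) = Subobject.mk (F.map f) :=
  Subobject.lift_mk _ f

variable {F}

theorem LiftsFactorizationsThroughMonos.mk_le_mk (hF : F.LiftsFactorizationsThroughMonos)
    {A B X : D} {f : A ⟶ X} {g : B ⟶ X} [Mono f] [Mono g]
    (hle : Subobject.mk (F.map f) ≤ Subobject.mk (F.map g)) : Subobject.mk f ≤ Subobject.mk g :=
  let ⟨h, hfac⟩ := hF f g _ (Subobject.ofMkLEMk_comp hle)
  Subobject.mk_le_mk_of_comm h hfac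

theorem LiftsFactorizationsThroughMonos.subobjectMap_injective
    (hF : F.LiftsFactorizationsThroughMonos) (X : D) : Function.Injective (F.subobjectMap X) := by
  intro P Q
  induction P, Q using Subobject.ind₂ with
  | h f g =>
    intro hPQ
    rw [subobjectMap_mk, subobjectMap_mk] at hPQ
    exact le_antisymm (hF.mk_le_mk hPQ.le) (hF.mk_le_mk hPQ.ge)

theorem LiftsFactorizationsThroughMonos.wellPowered (hF : F.LiftsFactorizationsThroughMonos)
    [LocallySmall.{w} D] [LocallySmall.{w} E] [WellPowered.{w} E] : WellPowered.{w} D where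
  subobject_small X := small_of_injective (hF.subobjectMap_injective X)

end CategoryTheory.Functor

namespace DecObj

variable {C : Type u} [Category.{v} C] [Preadditive C]

instance : (forgetDec C).Faithful where
  map_injective := Hom.ext

theorem intertwines_of_fac {A B X : DecObj C} {f : A ⟶ X} {g : B ⟶ X} [Mono g.ψ]
    {h : A.c ⟶ B.c} (hfac : h ≫ g.ψ = f.ψ) : Intertwines A B h := fun s => by
  rw [← cancel_mono g.ψ, Category.assoc, Category.assoc, hfac, g.comm s, f.comm s, ← hfac,
    Category.assoc]

section kernel

variable [HasKernels C]

noncomputable def kernelObj {X Y : DecObj C} (g : X ⟶ Y) : DecObj C where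
  c := kernel g.ψ
  S := X.S
  f s := kernel.lift g.ψ (kernel.ι g.ψ ≫ X.f s) (by
    rw [Category.assoc, g.comm s, ← Category.assoc, kernel.condition, zero_comp])
  hf s hs := by
    rw [← cancel_mono (kernel.ι g.ψ), kernel.lift_ι, X.hf s hs, comp_zero, zero_comp]

noncomputable def kernelι {X Y : DecObj C} (g : X ⟶ Y) : kernelObj g ⟶ X :=
  ⟨kernel.ι g.ψ, fun _ => kernel.lift_ι _ _ _⟩

/-- The decorated kernel makes `kernel.ι g.ψ` a morphism of `C ◁ Set`, so it vanishes when `g` is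
mono. -/
instance : (forgetDec C).PreservesMonomorphisms where
  preserves {X Y} g _ := by
    let zero : kernelObj g ⟶ X := ⟨0, fun _ => by rw [comp_zero, zero_comp]⟩
    have hι : kernelι g = zero := (cancel_mono g).1 <| Hom.ext <| by
      simp only [comp_ψ, kernelι, zero, zero_comp]
      exact kernel.condition g.ψ
    exact Preadditive.mono_of_kernel_zero (congrArg Hom.ψ hι)

theorem forgetDec_liftsFactorizationsThroughMonos :
    (forgetDec C).LiftsFactorizationsThroughMonos := fun _ _ _ _ g _ h hfac =>
  have : Mono g.ψ := (forgetDec C).map_mono g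
  ⟨⟨h, intertwines_of_fac hfac⟩, Hom.ext hfac⟩

end kernel

variable (C) in
def trivialDecoration : C ⥤ DecObj C where
  obj c := ⟨c, ∅, fun _ => 0, fun _ _ => rfl⟩
  map f := ⟨f, fun _ => by rw [zero_comp, comp_zero]⟩

instance : (trivialDecoration C).Full where
  map_surjective g := ⟨g.ψ, rfl⟩

instance : (trivialDecoration C).Faithful where
  map_injective h := congrArg Hom.ψ h

instance : (trivialDecoration C).PreservesMonomorphisms where
  preserves f _ := (forgetDec C).mono_of_mono_map (inferInstanceAs (Mono f))

end DecObj

/-- for abelian `C`, `C` is well-powered iff `C ◁ Set` is well-powered. -/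
theorem decoration_wellPowered_iff (C : Type u) [Category.{v} C] [Abelian C] :
    WellPowered.{v} C ↔ WellPowered.{v} (DecObj C) :=
  ⟨fun _ => Functor.LiftsFactorizationsThroughMonos.wellPowered.{v}
      DecObj.forgetDec_liftsFactorizationsThroughMonos,
    fun _ => Functor.LiftsFactorizationsThroughMonos.wellPowered.{v}
      (Functor.liftsFactorizationsThroughMonos_of_full_of_faithful (DecObj.trivialDecoration C))⟩
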